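/- Let G be a finite group, O a transfer system on G, and M the maximal compatible transfer system of O. Then a transfer K → H ∈ O belongs to M if and only if for every proper subgroup I < H, the restricted transfer (K ∩ I) → I belongs to M and the restriction is a compatibility success, i.e., (K ∩ I) → K ∈ O implies I → H ∈ O. -/

import Mathlib

/-- A transfer system on a group `G`: a binary relation on subgroups refining
inclusion, which is reflexive, closed under conjugation, restriction, and
composition. -/
structure TransferSystem (G : Type*) [Group G] where
  rel : Subgroup G → Subgroup G → Prop
  le_of_rel : ∀ {K H : Subgroup G}, rel K H → K ≤ H
  refl : ∀ H : Subgroup G, rel H H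
  conj : ∀ {K H : Subgroup G} (g : G), rel K H →
    rel (K.map (MulAut.conj g).toMonoidHom) (H.map (MulAut.conj g).toMonoidHom)
  restrict : ∀ {K H : Subgroup G} (L : Subgroup G), rel K H → L ≤ H → rel (K ⊓ L) L
  comp : ∀ {L K H : Subgroup G}, rel L K → rel K H → rel L H

/-- The pair `(Oa, Om)` of transfer systems is compatible. -/
def TransferSystem.Compatible {G : Type*} [Group G] (Oa Om : TransferSystem G) : Prop :=
  (∀ K H : Subgroup G, Om.rel K H → Oa.rel K H) ∧
  ∀ K J H : Subgroup G, J ≤ H → Om.rel K H → Oa.rel (K ⊓ J) K → Oa.rel J H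

/-- `M` is the maximal compatible transfer system of `O`. -/
def TransferSystem.IsMaxCompatible {G : Type*} [Group G] (O M : TransferSystem G) : Prop :=
  O.Compatible M ∧
  ∀ Om : TransferSystem G, O.Compatible Om → ∀ K H : Subgroup G, Om.rel K H → M.rel K H

/-- `T` is the transfer system generated by the binary relation `B`, i.e. the
smallest transfer system containing `B`. -/
def TransferSystem.IsGeneratedBy {G : Type*} [Group G] (T : TransferSystem G)
    (B : Subgroup G → Subgroup G → Prop) : Prop :=
  (∀ K H : Subgroup G, B K H → T.rel K H) ∧
  ∀ T' : TransferSystem G, (∀ K H : Subgroup G, B K H → T'.rel K H) →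
    ∀ K H : Subgroup G, T.rel K H → T'.rel K H

/-- The single transfer `K → H` is compatible with `Oa`. -/
def TransferSystem.EdgeCompatible {G : Type*} [Group G] (Oa : TransferSystem G)
    (K H : Subgroup G) : Prop :=
  ∀ J : Subgroup G, J ≤ H → Oa.rel (K ⊓ J) K → Oa.rel J H

/-- A transfer system is saturated. -/
def TransferSystem.Saturated {G : Type*} [Group G] (O : TransferSystem G) : Prop :=
  ∀ L K H : Subgroup G, L ≤ K → K ≤ H → O.rel L H → O.rel K H

/-- A transfer system is disklike: every transfer is a restriction of a
transfer to the full group. -/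
def TransferSystem.Disklike {G : Type*} [Group G] (O : TransferSystem G) : Prop :=
  ∀ K H : Subgroup G, O.rel K H → ∃ L : Subgroup G, O.rel L ⊤ ∧ K = L ⊓ H

/-- `r` is a proper restriction of `e` in the restriction order on transfers,
viewed as pairs of subgroups. -/
def RestrLt {G : Type*} [Group G] (r e : Subgroup G × Subgroup G) : Prop :=
  ∃ I : Subgroup G, I < e.2 ∧ r = (e.1 ⊓ I, I)

/-- `r ≺ e`: `r` is covered by `e` in the restriction order on transfers of `O`. -/
def RestrCovBy {G : Type*} [Group G] (O : TransferSystem G)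
    (r e : Subgroup G × Subgroup G) : Prop :=
  RestrLt r e ∧
    ¬ ∃ q : Subgroup G × Subgroup G, O.rel q.1 q.2 ∧ RestrLt r q ∧ RestrLt q e

/-- The binary relation `p⁻¹O` on subgroups of `G`, for `O` a transfer system
on `G ⧸ N`. -/
def preimageRel {G : Type*} [Group G] (N : Subgroup G) [N.Normal]
    (O : TransferSystem (G ⧸ N)) : Subgroup G → Subgroup G → Prop :=
  fun A B => ∃ K H : Subgroup (G ⧸ N), O.rel K H ∧
    A = Subgroup.comap (QuotientGroup.mk' N) K ∧ B = Subgroup.comap (QuotientGroup.mk' N) H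


/-!
The forward direction is restriction in `M` together with compatibility of `(O, M)`.
Conversely, adjoin to `M` every composite `A → gKg⁻¹ → gHg⁻¹ → B` whose outer legs lie
in `M`.
Since every proper restriction of `K → H` already lies in `M`, restricting such a composite
either keeps it of this form or lands in `M`; and in a finite group two conjugates of `K → H`
can only be chained when `K = H`. So this is a transfer system, compatible with `O` because
compatibility of single transfers is closed under composition; maximality of `M` then puts
`K → H` in `M`.
-/

open scoped Pointwise

theorem Subgroup.smul_eq_of_smul_le {G α : Type*} [Group G] [Finite G] [Group α]
    [MulDistribMulAction α G] {a b : α} {H : Subgroup G} (h : a • H ≤ b • H) :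
    a • H = b • H :=
  SetLike.coe_injective <| Set.eq_of_subset_of_ncard_le h <| by
    rw [Subgroup.coe_pointwise_smul, Subgroup.coe_pointwise_smul, Set.ncard_smul_set,
      Set.ncard_smul_set]

namespace TransferSystem

variable {G : Type*} [Group G]

theorem rel_smul (T : TransferSystem G) {K H : Subgroup G} (a : ConjAct G) (h : T.rel K H) :
    T.rel (a • K) (a • H) :=
  T.conj (ConjAct.ofConjAct a) h

theorem rel_smul_inf_of_lt_smul (T : TransferSystem G) {K H : Subgroup G}
    (hres : ∀ I < H, T.rel (K ⊓ I) I) (a : ConjAct G) {I : Subgroup G} (hI : I < a • H) :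
    T.rel (a • K ⊓ I) I := by
  have hI' : a⁻¹ • I < H :=
    (Subgroup.subset_pointwise_smul_iff.mp hI.le).lt_of_ne fun e =>
      hI.ne (by rw [← e, smul_inv_smul])
  simpa only [Subgroup.smul_inf, smul_inv_smul] using T.rel_smul a (hres _ hI')

theorem EdgeCompatible.of_forall_lt {O : TransferSystem G} {K H : Subgroup G}
    (h : ∀ I < H, O.rel (K ⊓ I) K → O.rel I H) : O.EdgeCompatible K H := by
  intro J hJ hJK
  rcases hJ.eq_or_lt with rfl | hlt
  · exact O.refl J
  · exact h J hlt hJK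

theorem EdgeCompatible.smul {O : TransferSystem G} {K H : Subgroup G} (h : O.EdgeCompatible K H)
    (a : ConjAct G) : O.EdgeCompatible (a • K) (a • H) := by
  intro J hJ hJK
  have hJ' : a⁻¹ • J ≤ H := Subgroup.subset_pointwise_smul_iff.mp hJ
  have hJK' : O.rel (K ⊓ a⁻¹ • J) K := by
    simpa only [Subgroup.smul_inf, inv_smul_smul] using O.rel_smul a⁻¹ hJK
  simpa only [smul_inv_smul] using O.rel_smul a (h _ hJ' hJK')

theorem EdgeCompatible.trans {O : TransferSystem G} {A C B : Subgroup G}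
    (hAC : O.EdgeCompatible A C) (hCB : O.EdgeCompatible C B) (hle : A ≤ C) :
    O.EdgeCompatible A B := by
  intro J hJ hAJ
  refine hCB J hJ (hAC (C ⊓ J) inf_le_left ?_)
  rwa [← inf_assoc, inf_eq_left.mpr hle]

theorem Compatible.edgeCompatible {O M : TransferSystem G} (hc : O.Compatible M)
    {K H : Subgroup G} (h : M.rel K H) : O.EdgeCompatible K H :=
  fun J hJ => hc.2 K J H hJ h

def adjoinRel (M : TransferSystem G) (K H : Subgroup G) (A B : Subgroup G) : Prop :=
  M.rel A B ∨ ∃ a : ConjAct G, M.rel A (a • K) ∧ M.rel (a • H) B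

variable [Finite G]

def adjoin (M : TransferSystem G) (K H : Subgroup G) (hle : K ≤ H)
    (hres : ∀ I < H, M.rel (K ⊓ I) I) : TransferSystem G where
  rel := M.adjoinRel K H
  le_of_rel := by
    rintro A B (h | ⟨a, hA, hB⟩)
    · exact M.le_of_rel h
    · exact (M.le_of_rel hA).trans ((smul_mono_right a hle).trans (M.le_of_rel hB))
  refl A := Or.inl (M.refl A)
  conj := by
    rintro A B g (h | ⟨a, hA, hB⟩)
    · exact Or.inl (M.conj g h)
    · refine Or.inr ⟨ConjAct.toConjAct g * a, ?_, ?_⟩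
      · rw [mul_smul]; exact M.rel_smul _ hA
      · rw [mul_smul]; exact M.rel_smul _ hB
  restrict := by
    rintro A B J (h | ⟨a, hA, hB⟩) hJ
    · exact Or.inl (M.restrict J h hJ)
    · have hAK : A ≤ a • K := M.le_of_rel hA
      have hKH : a • K ≤ a • H := smul_mono_right a hle
      have hHJ : M.rel (a • H ⊓ J) J := M.restrict J hB hJ
      by_cases hHle : a • H ≤ J
      · rw [inf_eq_left.mpr hHle] at hHJ
        rw [inf_eq_left.mpr (hAK.trans (hKH.trans hHle))]
        exact Or.inr ⟨a, hA, hHJ⟩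
      · -- `a • H ⊓ J` is a proper subgroup of `a • H`, so we can route through `M` alone.
        have hKJ := M.rel_smul_inf_of_lt_smul hres a (inf_lt_left.mpr hHle)
        rw [← inf_assoc, inf_eq_left.mpr hKH] at hKJ
        have hAJ := M.restrict (a • K ⊓ J) hA inf_le_left
        rw [← inf_assoc, inf_eq_left.mpr hAK] at hAJ
        exact Or.inl (M.comp hAJ (M.comp hKJ hHJ))
  comp := by
    rintro C A B (h | ⟨a, hC, hA⟩) (h' | ⟨b, hA', hB⟩)
    · exact Or.inl (M.comp h h')
    · exact Or.inr ⟨b, M.comp h hA', hB⟩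
    · exact Or.inr ⟨a, hC, M.comp hA h'⟩
    · -- `a • H ≤ b • K ≤ b • H` are equalities: conjugate subgroups have the same order.
      have hHK : M.rel (a • H) (b • K) := M.comp hA hA'
      have hKH : b • K ≤ b • H := smul_mono_right b hle
      have hab : a • H = b • H := Subgroup.smul_eq_of_smul_le ((M.le_of_rel hHK).trans hKH)
      have hK : b • K = b • H := le_antisymm hKH (hab ▸ M.le_of_rel hHK)
      rw [hK] at hHK
      exact Or.inr ⟨a, hC, M.comp hHK hB⟩

theorem rel_adjoin (M : TransferSystem G) {K H : Subgroup G} (hle : K ≤ H)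
    (hres : ∀ I < H, M.rel (K ⊓ I) I) : (M.adjoin K H hle hres).rel K H :=
  Or.inr ⟨1, by rw [one_smul]; exact M.refl K, by rw [one_smul]; exact M.refl H⟩

theorem Compatible.adjoin {O M : TransferSystem G} (hc : O.Compatible M) {K H : Subgroup G}
    (hKH : O.rel K H) (he : O.EdgeCompatible K H) (hres : ∀ I < H, M.rel (K ⊓ I) I) :
    O.Compatible (M.adjoin K H (O.le_of_rel hKH) hres) := by
  constructor
  · rintro A B (h | ⟨a, hA, hB⟩)
    · exact hc.1 A B h
    · exact O.comp (hc.1 _ _ hA) (O.comp (O.rel_smul a hKH) (hc.1 _ _ hB))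
  · rintro A J B hJ (h | ⟨a, hA, hB⟩)
    · exact hc.2 A J B hJ h
    · have haKB :=
        (he.smul a).trans (hc.edgeCompatible hB) (smul_mono_right a (O.le_of_rel hKH))
      exact (hc.edgeCompatible hA).trans haKB (M.le_of_rel hA) J hJ

end TransferSystem

/-- a transfer `K → H ∈ O` belongs to the maximal compatible
transfer system `M` of `O` iff for every proper subgroup `I < H`, the
restriction `(K ∩ I) → I` belongs to `M` and is a compatibility success. -/
theorem stmt_6 {G : Type*} [Group G] [Finite G] (O M : TransferSystem G)
    (hM : O.IsMaxCompatible M) (K H : Subgroup G) (hKH : O.rel K H) :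
    M.rel K H ↔
      ∀ I : Subgroup G, I < H → M.rel (K ⊓ I) I ∧ (O.rel (K ⊓ I) K → O.rel I H) := by
  refine ⟨fun h I hI => ⟨M.restrict I h hI.le, hM.1.edgeCompatible h I hI.le⟩, fun h => ?_⟩
  have hres : ∀ I < H, M.rel (K ⊓ I) I := fun I hI => (h I hI).1
  have he : O.EdgeCompatible K H := .of_forall_lt fun I hI => (h I hI).2
  exact hM.2 _ (hM.1.adjoin hKH he hres) K H (M.rel_adjoin _ hres)
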